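/- arXiv:1308.5980 — 2 statements merged into one kernel-verified Lean document; each statement's English description precedes it below -/
import Mathlib

section
/- Let a : ℕ≥1 → ℂ satisfy |a(m)| ≤ C·m^{σ₀} for some constants C > 0 and σ₀ ≥ 0. Then for every real σ > σ₀ + 1 and every X > 0 one has Σ_{m≥1} a(m)·e^{−m/X} = (1/2π)·∫_ℝ L(σ+it)·Γ(σ+it)·X^{σ+it} dt, where L(s) := Σ_{m≥1} a(m)·m^{−s} (absolutely convergent for Re s > σ₀ + 1), Γ is the complex Gamma function, and both the series and the integral converge absolutely. -/
open Complex MeasureTheory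

/-!
The Mellin transform of `e^{-x}` is `Γ`, so Mellin inversion on any line `Re s = σ > 0` gives
`e^{-m/X} = (1/2π) ∫ Γ(s) m^{-s} X^s dt`. On that line `|Γ(σ + it)| = O(t⁻²)`, by
`Γ(s + 2) = s (s + 1) Γ(s)` and `|Γ(s + 2)| ≤ Γ(σ + 2)`, while `|a(m) m^{-s}| = |a(m)| m^{-σ}` is
summable independently of `t`; hence multiplying by `a(m)` and summing over `m` may be done under
the integral.
-/

namespace Complex

lemma norm_Gamma_le_Gamma_re {z : ℂ} (hz : 0 < z.re) : ‖Gamma z‖ ≤ Real.Gamma z.re := by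
  rw [Gamma_eq_integral hz, GammaIntegral, Real.Gamma_eq_integral hz]
  refine (norm_integral_le_integral_norm _).trans_eq ?_
  refine setIntegral_congr_fun measurableSet_Ioi fun x hx => ?_
  rw [norm_mul, norm_real, norm_cpow_eq_rpow_re_of_pos hx]
  simp [abs_of_pos (Real.exp_pos (-x))]

lemma continuous_Gamma_vertical {σ : ℝ} (hσ : 0 < σ) :
    Continuous fun t : ℝ => Gamma (σ + t * I) := by
  refine continuous_iff_continuousAt.mpr fun t => ?_
  refine (continuousAt_Gamma _ fun m h => ?_).comp (by fun_prop)
  have : σ = -m := by simpa using congrArg re h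
  linarith [m.cast_nonneg (α := ℝ)]

lemma min_mul_one_add_sq_le_norm_mul_norm {σ : ℝ} (hσ : 0 < σ) (t : ℝ) :
    min σ 1 * (1 + t ^ 2) ≤ ‖(σ + t * I : ℂ)‖ * ‖(σ + t * I : ℂ) + 1‖ := by
  have hm : 0 ≤ min σ 1 := le_min hσ.le zero_le_one
  have h₁ : (min σ 1) ^ 2 * (1 + t ^ 2) ≤ ‖(σ + t * I : ℂ)‖ ^ 2 := by
    rw [Complex.sq_norm, normSq_add_mul_I]
    have hσ' : min σ 1 ^ 2 ≤ σ ^ 2 := pow_le_pow_left₀ hm (min_le_left σ 1) 2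
    have h1 : min σ 1 ^ 2 ≤ 1 := pow_le_one₀ hm (min_le_right σ 1)
    nlinarith [mul_le_mul_of_nonneg_right h1 (sq_nonneg t)]
  have h₂ : 1 + t ^ 2 ≤ ‖(σ + t * I : ℂ) + 1‖ ^ 2 := by
    rw [show (σ + t * I : ℂ) + 1 = ((σ + 1 : ℝ) : ℂ) + t * I by push_cast; ring, Complex.sq_norm,
      normSq_add_mul_I]
    nlinarith
  rw [← pow_le_pow_iff_left₀ (by positivity) (by positivity) two_ne_zero, mul_pow, mul_pow]
  calc min σ 1 ^ 2 * (1 + t ^ 2) ^ 2 = min σ 1 ^ 2 * (1 + t ^ 2) * (1 + t ^ 2) := by ring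
    _ ≤ _ := mul_le_mul h₁ h₂ (by positivity) (by positivity)

lemma norm_Gamma_vertical_le {σ : ℝ} (hσ : 0 < σ) (t : ℝ) :
    ‖Gamma (σ + t * I)‖ ≤ Real.Gamma (σ + 2) / min σ 1 * (1 + t ^ 2)⁻¹ := by
  set s : ℂ := σ + t * I
  have hs : s.re = σ := by simp [s]
  have hs₀ : s ≠ 0 := fun h => hσ.ne (by simpa [h] using hs)
  have hs₁ : s + 1 ≠ 0 := fun h => by
    have := congrArg re h; simp [hs] at this; linarith
  have hrec : Gamma (s + 2) = s * (s + 1) * Gamma s := by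
    rw [show s + 2 = s + 1 + 1 by ring, Gamma_add_one _ hs₁, Gamma_add_one _ hs₀]; ring
  have hbound : ‖s‖ * ‖s + 1‖ * ‖Gamma s‖ ≤ Real.Gamma (σ + 2) := by
    have h2 : (s + 2).re = σ + 2 := by simp [hs]
    calc ‖s‖ * ‖s + 1‖ * ‖Gamma s‖ = ‖Gamma (s + 2)‖ := by rw [hrec, norm_mul, norm_mul]
      _ ≤ Real.Gamma (σ + 2) := h2 ▸ norm_Gamma_le_Gamma_re (by rw [h2]; linarith)
  have hm : 0 < min σ 1 * (1 + t ^ 2) := by positivity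
  rw [← div_eq_mul_inv, div_div, le_div_iff₀ hm]
  calc ‖Gamma s‖ * (min σ 1 * (1 + t ^ 2)) ≤ ‖Gamma s‖ * (‖s‖ * ‖s + 1‖) :=
        mul_le_mul_of_nonneg_left (min_mul_one_add_sq_le_norm_mul_norm hσ t) (norm_nonneg _)
    _ ≤ Real.Gamma (σ + 2) := by linarith

lemma verticalIntegrable_Gamma {σ : ℝ} (hσ : 0 < σ) : VerticalIntegrable Gamma σ :=
  (integrable_inv_one_add_sq.const_mul _).mono' (continuous_Gamma_vertical hσ).aestronglyMeasurable
    (ae_of_all _ (norm_Gamma_vertical_le hσ))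

lemma mellinInv_Gamma {σ : ℝ} (hσ : 0 < σ) {x : ℝ} (hx : 0 < x) :
    mellinInv σ Gamma x = Real.exp (-x) := by
  set f : ℝ → ℂ := fun y => Real.exp (-y)
  have hmellin : ∀ t : ℝ, mellin f (σ + t * I) = Gamma (σ + t * I) := fun t => by
    rw [← GammaIntegral_eq_mellin, Gamma_eq_integral (by simpa using hσ)]
  have hconv : MellinConvergent f σ :=
    (GammaIntegral_convergent (s := σ) (by simpa using hσ)).congr_fun
      (fun y _ => by simp [f, mul_comm]) measurableSet_Ioi
  have hvert : VerticalIntegrable (mellin f) σ := by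
    simpa only [VerticalIntegrable, hmellin] using verticalIntegrable_Gamma hσ
  calc mellinInv σ Gamma x = mellinInv σ (mellin f) x := by simp only [mellinInv, hmellin]
    _ = Real.exp (-x) := mellinInv_mellin_eq σ f hx hconv hvert (by fun_prop)

end Complex

section TsumMul

variable {α ι 𝕜 : Type*} [MeasurableSpace α] {μ : Measure α} [Countable ι] [RCLike 𝕜]
  {f : ι → α → 𝕜} {g : α → 𝕜} {b : ι → ℝ}

lemma integrable_tsum_mul_of_norm_le (hf : ∀ i, AEStronglyMeasurable (f i) μ)
    (hfb : ∀ i x, ‖f i x‖ ≤ b i) (hb : Summable b) (hg : Integrable g μ) :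
    Integrable (fun x => (∑' i, f i x) * g x) μ := by
  have hnorm : ∀ x, Summable fun i => ‖f i x‖ := fun x =>
    hb.of_nonneg_of_le (fun i => norm_nonneg _) (hfb · x)
  refine hg.bdd_mul (c := ∑' i, b i) ?_ (ae_of_all _ fun x => ?_)
  · exact aestronglyMeasurable_of_tendsto_ae (f := fun s x => ∑ i ∈ s, f i x) Filter.atTop
      (fun s => Finset.aestronglyMeasurable_fun_sum s fun i _ => hf i)
      (ae_of_all _ fun x => (hnorm x).of_norm.hasSum)
  · exact (norm_tsum_le_tsum_norm (hnorm x)).trans (Summable.tsum_le_tsum (hfb · x) (hnorm x) hb)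

lemma integral_tsum_mul_of_norm_le (hf : ∀ i, AEStronglyMeasurable (f i) μ)
    (hfb : ∀ i x, ‖f i x‖ ≤ b i) (hb : Summable b) (hg : Integrable g μ) :
    ∫ x, (∑' i, f i x) * g x ∂μ = ∑' i, ∫ x, f i x * g x ∂μ := by
  have hint : ∀ i, Integrable (fun x => f i x * g x) μ := fun i =>
    hg.bdd_mul (hf i) (ae_of_all _ (hfb i))
  have hsum : Summable fun i => ∫ x, ‖f i x * g x‖ ∂μ := by
    refine (hb.mul_right (∫ x, ‖g x‖ ∂μ)).of_nonneg_of_le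
      (fun i => integral_nonneg fun x => norm_nonneg _) fun i => ?_
    rw [← integral_const_mul]
    refine integral_mono (hint i).norm (hg.norm.const_mul _) fun x => ?_
    rw [norm_mul]
    exact mul_le_mul_of_nonneg_right (hfb i x) (norm_nonneg _)
  rw [integral_tsum_of_summable_integral_norm hint hsum]
  exact integral_congr_ae (ae_of_all _ fun x =>
    ((hb.of_norm_bounded (hfb · x)).tsum_mul_right (g x)).symm)

end TsumMul

lemma exp_neg_div_eq_integral_cpow_mul_Gamma {σ : ℝ} (hσ : 0 < σ) {u X : ℝ} (hu : 0 < u)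
    (hX : 0 < X) :
    (Real.exp (-u / X) : ℂ) = 1 / (2 * Real.pi) *
      ∫ t : ℝ, (u : ℂ) ^ (-(σ + t * I)) * (Gamma (σ + t * I) * (X : ℂ) ^ (σ + t * I)) := by
  rw [neg_div, ← mellinInv_Gamma hσ (div_pos hu hX), mellinInv, real_smul]
  push_cast
  congr 1
  refine integral_congr_ae (ae_of_all _ fun t => ?_)
  dsimp only
  rw [smul_eq_mul, div_cpow_ofReal_nonneg hu.le hX.le, cpow_neg (X : ℂ), div_inv_eq_mul]
  ring

section DirichletSeries

variable {c : ℕ+ → ℂ}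

lemma norm_mul_natCast_cpow_neg_vertical (z : ℂ) (m : ℕ+) (σ t : ℝ) :
    ‖z * (m : ℂ) ^ (-(σ + t * I))‖ = ‖z * (m : ℂ) ^ (-(σ : ℂ))‖ := by
  simp [norm_natCast_cpow_of_pos m.pos]

lemma summable_norm_mul_cpow_neg_of_norm_le_rpow {C σ₀ : ℝ} (hc : ∀ m, ‖c m‖ ≤ C * (m : ℝ) ^ σ₀)
    {s : ℂ} (hs : σ₀ + 1 < s.re) : Summable fun m => ‖c m * (m : ℂ) ^ (-s)‖ := by
  have hmaj : Summable fun m : ℕ+ => C * (m : ℝ) ^ (σ₀ - s.re) :=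
    ((Real.summable_nat_rpow.mpr (by linarith)).comp_injective PNat.coe_injective).mul_left C
  refine hmaj.of_nonneg_of_le (fun m => norm_nonneg _) fun m => ?_
  have hm : (0 : ℝ) < m := by exact_mod_cast m.pos
  calc ‖c m * (m : ℂ) ^ (-s)‖ = ‖c m‖ * (m : ℝ) ^ (-s.re) := by
        rw [norm_mul, norm_natCast_cpow_of_pos m.pos, neg_re]
    _ ≤ C * (m : ℝ) ^ σ₀ * (m : ℝ) ^ (-s.re) := by gcongr; exact hc m
    _ = C * (m : ℝ) ^ (σ₀ - s.re) := by rw [mul_assoc, ← Real.rpow_add hm, sub_eq_add_neg]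

lemma summable_norm_mul_exp_neg_div_of_norm_le_rpow {C σ₀ : ℝ}
    (hc : ∀ m, ‖c m‖ ≤ C * (m : ℝ) ^ σ₀) {X : ℝ} (hX : 0 < X) :
    Summable fun m => ‖c m * (Real.exp (-(m : ℝ) / X) : ℂ)‖ := by
  have hC : 0 ≤ C := by simpa using (norm_nonneg _).trans (hc 1)
  set k := ⌈σ₀⌉₊
  have hmaj : Summable fun m : ℕ+ => C * ((m : ℝ) ^ k * Real.exp (-X⁻¹ * m)) :=
    ((Real.summable_pow_mul_exp_neg_nat_mul k (inv_pos.mpr hX)).comp_injective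
      PNat.coe_injective).mul_left C
  refine hmaj.of_nonneg_of_le (fun m => norm_nonneg _) fun m => ?_
  have hm : (1 : ℝ) ≤ m := by exact_mod_cast m.pos
  rw [norm_mul, norm_real, Real.norm_of_nonneg (Real.exp_nonneg _), ← mul_assoc,
    show -(m : ℝ) / X = -X⁻¹ * m by ring]
  gcongr
  calc ‖c m‖ ≤ C * (m : ℝ) ^ σ₀ := hc m
    _ ≤ C * (m : ℝ) ^ k := by
      rw [← Real.rpow_natCast]; gcongr
      exact Nat.le_ceil σ₀

variable {σ X : ℝ}

lemma integrable_Gamma_mul_cpow_vertical (hσ : 0 < σ) (hX : 0 < X) :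
    Integrable fun t : ℝ => Gamma (σ + t * I) * (X : ℂ) ^ (σ + t * I) :=
  (verticalIntegrable_Gamma hσ).mul_bdd (c := X ^ σ)
    ((by fun_prop : Continuous fun t : ℝ => (σ + t * I : ℂ)).const_cpow
      (.inl (ofReal_ne_zero.mpr hX.ne'))).aestronglyMeasurable
    (ae_of_all _ fun t => by simp [norm_cpow_eq_rpow_re_of_pos hX])

lemma continuous_mul_cpow_neg_vertical (z : ℂ) (m : ℕ+) (σ : ℝ) :
    Continuous fun t : ℝ => z * (m : ℂ) ^ (-(σ + t * I)) :=
  continuous_const.mul <| (by fun_prop : Continuous fun t : ℝ => -(σ + t * I : ℂ)).const_cpow <|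
    .inl <| Nat.cast_ne_zero.mpr m.ne_zero

lemma integrable_tsum_mul_cpow_neg_mul_Gamma_mul_cpow (hσ : 0 < σ) (hX : 0 < X)
    (hc : Summable fun m => ‖c m * (m : ℂ) ^ (-(σ : ℂ))‖) :
    Integrable fun t : ℝ =>
      (∑' m, c m * (m : ℂ) ^ (-(σ + t * I))) * Gamma (σ + t * I) * (X : ℂ) ^ (σ + t * I) := by
  simp_rw [mul_assoc _ (Gamma _)]
  exact integrable_tsum_mul_of_norm_le
    (fun m => (continuous_mul_cpow_neg_vertical (c m) m σ).aestronglyMeasurable)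
    (fun m t => (norm_mul_natCast_cpow_neg_vertical (c m) m σ t).le) hc
    (integrable_Gamma_mul_cpow_vertical hσ hX)

lemma tsum_mul_exp_neg_div_eq_integral (hσ : 0 < σ) (hX : 0 < X)
    (hc : Summable fun m => ‖c m * (m : ℂ) ^ (-(σ : ℂ))‖) :
    ∑' m, c m * (Real.exp (-(m : ℝ) / X) : ℂ) = 1 / (2 * Real.pi) * ∫ t : ℝ,
      (∑' m, c m * (m : ℂ) ^ (-(σ + t * I))) * Gamma (σ + t * I) * (X : ℂ) ^ (σ + t * I) := by
  simp_rw [mul_assoc _ (Gamma _)]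
  rw [integral_tsum_mul_of_norm_le
    (fun m => (continuous_mul_cpow_neg_vertical (c m) m σ).aestronglyMeasurable)
    (fun m t => (norm_mul_natCast_cpow_neg_vertical (c m) m σ t).le) hc
    (integrable_Gamma_mul_cpow_vertical hσ hX), ← tsum_mul_left]
  refine tsum_congr fun m => ?_
  have hm : (0 : ℝ) < m := by exact_mod_cast m.pos
  simp_rw [exp_neg_div_eq_integral_cpow_mul_Gamma hσ hm hX, mul_assoc (c m), integral_const_mul,
    ofReal_natCast]
  ring

end DirichletSeries

theorem stmt5_general (a : ℕ → ℂ) (C σ₀ : ℝ) (hσ₀ : 0 ≤ σ₀)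
    (ha : ∀ m : ℕ, 1 ≤ m → ‖a m‖ ≤ C * (m : ℝ) ^ σ₀)
    (σ : ℝ) (hσ : σ₀ + 1 < σ) (X : ℝ) (hX : 0 < X) :
    Summable (fun m : ℕ+ => ‖a (m : ℕ) * (Real.exp (-(m : ℝ) / X) : ℂ)‖) ∧
    (∀ s : ℂ, σ₀ + 1 < s.re → Summable (fun m : ℕ+ => ‖a (m : ℕ) * (m : ℂ) ^ (-s)‖)) ∧
    Integrable (fun t : ℝ =>
      (∑' m : ℕ+, a (m : ℕ) * (m : ℂ) ^ (-((σ : ℂ) + t * I))) *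
        Complex.Gamma ((σ : ℂ) + t * I) * (X : ℂ) ^ ((σ : ℂ) + t * I)) ∧
    (∑' m : ℕ+, a (m : ℕ) * (Real.exp (-(m : ℝ) / X) : ℂ))
      = (1 / (2 * (Real.pi : ℂ))) * ∫ t : ℝ,
          (∑' m : ℕ+, a (m : ℕ) * (m : ℂ) ^ (-((σ : ℂ) + t * I))) *
            Complex.Gamma ((σ : ℂ) + t * I) * (X : ℂ) ^ ((σ : ℂ) + t * I) := by
  have ha' : ∀ m : ℕ+, ‖a m‖ ≤ C * (m : ℝ) ^ σ₀ := fun m => ha m m.pos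
  have hσpos : 0 < σ := by linarith
  have hLσ := summable_norm_mul_cpow_neg_of_norm_le_rpow ha' (s := σ) (by simpa using hσ)
  exact ⟨summable_norm_mul_exp_neg_div_of_norm_le_rpow ha' hX,
    fun s hs => summable_norm_mul_cpow_neg_of_norm_le_rpow ha' hs,
    integrable_tsum_mul_cpow_neg_mul_Gamma_mul_cpow hσpos hX hLσ,
    tsum_mul_exp_neg_div_eq_integral hσpos hX hLσ⟩

/-- Inverse Mellin transform: for `σ > σ₀ + 1`,
`Σ_{m≥1} a(m) e^{−m/X} = (1/2π) ∫_ℝ L(σ+it) Γ(σ+it) X^{σ+it} dt`, where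
`L(s) = Σ a(m) m^{−s}`; both the series and the integral converge absolutely. -/
theorem stmt5 (a : ℕ → ℂ) (C σ₀ : ℝ) (hC : 0 < C) (hσ₀ : 0 ≤ σ₀)
    (ha : ∀ m : ℕ, 1 ≤ m → ‖a m‖ ≤ C * (m : ℝ) ^ σ₀)
    (σ : ℝ) (hσ : σ₀ + 1 < σ) (X : ℝ) (hX : 0 < X) :
    Summable (fun m : ℕ+ => ‖a (m : ℕ) * (Real.exp (-(m : ℝ) / X) : ℂ)‖) ∧
    (∀ s : ℂ, σ₀ + 1 < s.re → Summable (fun m : ℕ+ => ‖a (m : ℕ) * (m : ℂ) ^ (-s)‖)) ∧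
    Integrable (fun t : ℝ =>
      (∑' m : ℕ+, a (m : ℕ) * (m : ℂ) ^ (-((σ : ℂ) + t * I))) *
        Complex.Gamma ((σ : ℂ) + t * I) * (X : ℂ) ^ ((σ : ℂ) + t * I)) ∧
    (∑' m : ℕ+, a (m : ℕ) * (Real.exp (-(m : ℝ) / X) : ℂ))
      = (1 / (2 * (Real.pi : ℂ))) * ∫ t : ℝ,
          (∑' m : ℕ+, a (m : ℕ) * (m : ℂ) ^ (-((σ : ℂ) + t * I))) *
            Complex.Gamma ((σ : ℂ) + t * I) * (X : ℂ) ^ ((σ : ℂ) + t * I) :=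
  stmt5_general a C σ₀ hσ₀ ha σ hσ X hX
end

section
/- Let N be a squarefree positive integer, let a be a positive divisor of N, and let Q be a positive integer. For τ ∈ ℂ define z⁺_{a,Q}(τ) := (N/a)^{τ−1/2}·Q^{−τ}·∏_{p ∣ N} (1 − p^{−1+2τ})^{−1}·∏_{p ∣ (N/a)} (1 − p^{−1})·∏_{p ∣ a} (p^{−1+2τ}/(1 − p^{2τ}))·(p^{−1}(p−1)² + p^{2α_pτ}·(p^{2τ} − p)·(1 − p^{−(1+2τ)}))·∏_{p ∣ Q, p ∤ N} (1 − p^{2τ})^{−1}·((1 − p^{−1}) − p^{2(α_p+1)τ}·(1 − p^{−(1+2τ)})), where the products run over primes p and α_p := v_p(Q). Then all factors are finite and nonzero-denominator at τ = −1/2 and z⁺_{a,Q}(−1/2) = √Q · ∏_{p ∣ N} (p+1)^{−1}; in particular the value is independent of the divisor a. -/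
open Complex

/-- The ratio of Dirichlet polynomials `z⁺_{a,Q}(τ)`. -/
noncomputable def zPlus (N a Q : ℕ) (τ : ℂ) : ℂ :=
  ((N : ℂ) / (a : ℂ)) ^ (τ - 1 / 2) * (Q : ℂ) ^ (-τ) *
    (∏ p ∈ N.primeFactors, (1 - (p : ℂ) ^ (-1 + 2 * τ))⁻¹) *
    (∏ p ∈ (N / a).primeFactors, (1 - (p : ℂ)⁻¹)) *
    (∏ p ∈ a.primeFactors, ((p : ℂ) ^ (-1 + 2 * τ) / (1 - (p : ℂ) ^ (2 * τ))) *
      ((p : ℂ)⁻¹ * ((p : ℂ) - 1) ^ 2 +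
        (p : ℂ) ^ (2 * (Q.factorization p : ℂ) * τ) * ((p : ℂ) ^ (2 * τ) - (p : ℂ)) *
          (1 - (p : ℂ) ^ (-(1 + 2 * τ))))) *
    (∏ p ∈ Q.primeFactors.filter (fun p => ¬ p ∣ N), (1 - (p : ℂ) ^ (2 * τ))⁻¹ *
      ((1 - (p : ℂ)⁻¹) -
        (p : ℂ) ^ (2 * ((Q.factorization p : ℂ) + 1) * τ) * (1 - (p : ℂ) ^ (-(1 + 2 * τ)))))

private lemma castC_ne_zero {p : ℕ} (hp : p.Prime) : (p : ℂ) ≠ 0 :=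
  Nat.cast_ne_zero.mpr hp.pos.ne'

private lemma one_sub_inv_ne {p : ℕ} (hp : p.Prime) : (1 : ℂ) - (p : ℂ)⁻¹ ≠ 0 := by
  rw [sub_ne_zero]
  intro h
  rw [eq_comm, inv_eq_one] at h
  exact hp.one_lt.ne' (by exact_mod_cast h)

private lemma one_sub_sq_inv_ne {p : ℕ} (hp : p.Prime) : (1 : ℂ) - ((p : ℂ) ^ 2)⁻¹ ≠ 0 := by
  rw [sub_ne_zero]
  intro h
  rw [eq_comm, inv_eq_one] at h
  have : (p : ℂ) ^ 2 = ((p ^ 2 : ℕ) : ℂ) := by push_cast; ring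
  rw [this] at h
  have : p ^ 2 = 1 := by exact_mod_cast h
  nlinarith [hp.two_le]

private lemma add_one_ne {p : ℕ} (hp : p.Prime) : (p : ℂ) + 1 ≠ 0 := by
  have : ((p : ℂ) + 1) = ((p + 1 : ℕ) : ℂ) := by push_cast; ring
  rw [this]
  exact Nat.cast_ne_zero.mpr (by omega)

private lemma sub_one_ne {p : ℕ} (hp : p.Prime) : (p : ℂ) - 1 ≠ 0 := by
  rw [sub_ne_zero]
  intro h
  exact hp.one_lt.ne' (by exact_mod_cast h)

private lemma hE2 (p : ℕ) : (p : ℂ) ^ (-1 + 2 * (-(1 : ℂ) / 2)) = ((p : ℂ) ^ 2)⁻¹ := by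
  rw [show (-1 + 2 * (-(1 : ℂ) / 2)) = ((-2 : ℤ) : ℂ) by norm_num, Complex.cpow_intCast]
  rw [show ((-2 : ℤ)) = -(2 : ℤ) by rfl, zpow_neg, show ((2:ℤ)) = ((2:ℕ):ℤ) by rfl,
    zpow_natCast]

private lemma hE1 (p : ℕ) : (p : ℂ) ^ (2 * (-(1 : ℂ) / 2)) = (p : ℂ)⁻¹ := by
  rw [show (2 * (-(1 : ℂ) / 2)) = ((-1 : ℤ) : ℂ) by norm_num, Complex.cpow_intCast, zpow_neg_one]

private lemma hE0 (p : ℕ) : (p : ℂ) ^ (-(1 + 2 * (-(1 : ℂ) / 2))) = 1 := by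
  rw [show (-(1 + 2 * (-(1 : ℂ) / 2))) = 0 by norm_num, Complex.cpow_zero]

/-- At `τ = −1/2` all denominators of `z⁺_{a,Q}` are nonzero and
`z⁺_{a,Q}(−1/2) = √Q ∏_{p ∣ N} (p+1)⁻¹`, independently of the divisor `a` of `N`. -/
theorem stmt12 (N : ℕ) (hN : 0 < N) (hNsq : Squarefree N)
    (a : ℕ) (ha0 : 0 < a) (ha : a ∣ N) (Q : ℕ) (hQ : 0 < Q) :
    (∀ p ∈ N.primeFactors, (1 : ℂ) - (p : ℂ) ^ (-1 + 2 * (-(1 : ℂ) / 2)) ≠ 0) ∧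
    (∀ p ∈ a.primeFactors, (1 : ℂ) - (p : ℂ) ^ (2 * (-(1 : ℂ) / 2)) ≠ 0) ∧
    (∀ p ∈ Q.primeFactors.filter (fun p => ¬ p ∣ N),
      (1 : ℂ) - (p : ℂ) ^ (2 * (-(1 : ℂ) / 2)) ≠ 0) ∧
    zPlus N a Q (-(1 : ℂ) / 2)
      = (Real.sqrt Q : ℂ) * ∏ p ∈ N.primeFactors, ((p : ℂ) + 1)⁻¹ := by
  refine ⟨fun p hp => ?_, fun p hp => ?_, fun p hp => ?_, ?_⟩
  · rw [hE2 p]; exact one_sub_sq_inv_ne (Nat.prime_of_mem_primeFactors hp)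
  · rw [hE1 p]; exact one_sub_inv_ne (Nat.prime_of_mem_primeFactors hp)
  · rw [hE1 p]
    exact one_sub_inv_ne (Nat.prime_of_mem_primeFactors (Finset.mem_filter.mp hp).1)
  · -- the main evaluation
    set b := N / a with hbdef
    have hNab : N = a * b := (Nat.mul_div_cancel' ha).symm
    have hb0 : 0 < b := Nat.div_pos (Nat.le_of_dvd hN ha) ha0
    obtain ⟨hcop, hsqa, hsqb⟩ := Nat.squarefree_mul_iff.mp (hNab ▸ hNsq)
    have hunion : N.primeFactors = a.primeFactors ∪ b.primeFactors := by
      rw [hNab]; exact Nat.primeFactors_mul ha0.ne' hb0.ne'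
    have hdisj : Disjoint a.primeFactors b.primeFactors := hcop.disjoint_primeFactors
    rw [zPlus]
    -- head factors
    have hhead : ((N : ℂ) / (a : ℂ)) ^ (-(1 : ℂ) / 2 - 1 / 2) = (b : ℂ)⁻¹ := by
      rw [show (-(1 : ℂ) / 2 - 1 / 2) = ((-1 : ℤ) : ℂ) by norm_num, Complex.cpow_intCast,
        zpow_neg_one, inv_div]
      have haC : (a : ℂ) ≠ 0 := Nat.cast_ne_zero.mpr ha0.ne'
      have hbC : (b : ℂ) ≠ 0 := Nat.cast_ne_zero.mpr (Nat.div_pos (Nat.le_of_dvd hN ha) ha0).ne'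
      rw [hNab]
      push_cast
      rw [div_mul_eq_div_div, div_self haC, one_div]
    have hsqrt : (Q : ℂ) ^ (-(-(1 : ℂ) / 2)) = ((Real.sqrt Q : ℝ) : ℂ) := by
      rw [show (-(-(1 : ℂ) / 2)) = (((1 / 2 : ℝ) : ℂ)) by norm_num,
        show ((Q : ℂ)) = (((Q : ℝ) : ℂ)) by norm_num,
        ← Complex.ofReal_cpow (Nat.cast_nonneg Q), Real.sqrt_eq_rpow]
    rw [hhead, hsqrt]
    -- the four products
    have hP1 : (∏ p ∈ N.primeFactors, (1 - (p : ℂ) ^ (-1 + 2 * (-(1 : ℂ) / 2)))⁻¹)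
        = (∏ p ∈ a.primeFactors, (1 - ((p : ℂ) ^ 2)⁻¹)⁻¹) *
          (∏ p ∈ b.primeFactors, (1 - ((p : ℂ) ^ 2)⁻¹)⁻¹) := by
      rw [hunion, Finset.prod_union hdisj]
      exact congrArg₂ _ (Finset.prod_congr rfl fun p _ => by rw [hE2 p])
        (Finset.prod_congr rfl fun p _ => by rw [hE2 p])
    have hP3 : (∏ p ∈ a.primeFactors, ((p : ℂ) ^ (-1 + 2 * (-(1 : ℂ) / 2)) /
          (1 - (p : ℂ) ^ (2 * (-(1 : ℂ) / 2)))) *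
        ((p : ℂ)⁻¹ * ((p : ℂ) - 1) ^ 2 +
          (p : ℂ) ^ (2 * (Q.factorization p : ℂ) * (-(1 : ℂ) / 2)) *
            ((p : ℂ) ^ (2 * (-(1 : ℂ) / 2)) - (p : ℂ)) *
            (1 - (p : ℂ) ^ (-(1 + 2 * (-(1 : ℂ) / 2))))))
        = ∏ p ∈ a.primeFactors, ((p : ℂ) - 1) * ((p : ℂ) ^ 2)⁻¹ := by
      refine Finset.prod_congr rfl fun p hp => ?_
      have hpp := Nat.prime_of_mem_primeFactors hp
      rw [hE2 p, hE1 p, hE0 p, sub_self, mul_zero, add_zero]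
      have h0 := castC_ne_zero hpp
      have h1 := one_sub_inv_ne hpp
      rw [div_mul_eq_mul_div, div_eq_iff h1]
      field_simp
    have hP4 : (∏ p ∈ Q.primeFactors.filter (fun p => ¬ p ∣ N),
          (1 - (p : ℂ) ^ (2 * (-(1 : ℂ) / 2)))⁻¹ *
        ((1 - (p : ℂ)⁻¹) -
          (p : ℂ) ^ (2 * ((Q.factorization p : ℂ) + 1) * (-(1 : ℂ) / 2)) *
            (1 - (p : ℂ) ^ (-(1 + 2 * (-(1 : ℂ) / 2)))))) = 1 := by
      rw [Finset.prod_eq_one]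
      intro p hp
      have hpp := Nat.prime_of_mem_primeFactors (Finset.mem_filter.mp hp).1
      rw [hE1 p, hE0 p, sub_self, mul_zero, sub_zero]
      exact inv_mul_cancel₀ (one_sub_inv_ne hpp)
    rw [hP1, hP3, hP4, hunion, Finset.prod_union hdisj]
    -- combine the per-prime factors over a and over b
    have hA : (∏ p ∈ a.primeFactors, (1 - ((p : ℂ) ^ 2)⁻¹)⁻¹) *
        (∏ p ∈ a.primeFactors, ((p : ℂ) - 1) * ((p : ℂ) ^ 2)⁻¹)
        = ∏ p ∈ a.primeFactors, ((p : ℂ) + 1)⁻¹ := by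
      rw [← Finset.prod_mul_distrib]
      refine Finset.prod_congr rfl fun p hp => ?_
      have hpp := Nat.prime_of_mem_primeFactors hp
      have h0 := castC_ne_zero hpp
      have h1 := sub_one_ne hpp
      have h2 := add_one_ne hpp
      have h3 := one_sub_sq_inv_ne hpp
      rw [inv_mul_eq_div, div_eq_iff h3]
      field_simp
      ring
    have hB : (∏ p ∈ b.primeFactors, (1 - ((p : ℂ) ^ 2)⁻¹)⁻¹) *
        (∏ p ∈ b.primeFactors, (1 - (p : ℂ)⁻¹))
        = (b : ℂ) * ∏ p ∈ b.primeFactors, ((p : ℂ) + 1)⁻¹ := by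
      have : (∏ p ∈ b.primeFactors, (1 - ((p : ℂ) ^ 2)⁻¹)⁻¹) *
          (∏ p ∈ b.primeFactors, (1 - (p : ℂ)⁻¹))
          = ∏ p ∈ b.primeFactors, ((p : ℂ) * ((p : ℂ) + 1)⁻¹) := by
        rw [← Finset.prod_mul_distrib]
        refine Finset.prod_congr rfl fun p hp => ?_
        have hpp := Nat.prime_of_mem_primeFactors hp
        have h0 := castC_ne_zero hpp
        have h1 := sub_one_ne hpp
        have h2 := add_one_ne hpp
        have h3 := one_sub_sq_inv_ne hpp
        rw [inv_mul_eq_div, div_eq_iff h3]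
        field_simp
        ring
      rw [this, Finset.prod_mul_distrib]
      congr 1
      rw [← Nat.cast_prod, Nat.prod_primeFactors_of_squarefree hsqb]
    have hbC : (b : ℂ) ≠ 0 := Nat.cast_ne_zero.mpr hb0.ne'
    have hbinv : (b : ℂ) * (b : ℂ)⁻¹ = 1 := mul_inv_cancel₀ hbC
    set S := ((Real.sqrt Q : ℝ) : ℂ)
    set PA := ∏ p ∈ a.primeFactors, (1 - ((p : ℂ) ^ 2)⁻¹)⁻¹
    set PB := ∏ p ∈ b.primeFactors, (1 - ((p : ℂ) ^ 2)⁻¹)⁻¹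
    set GB := ∏ p ∈ b.primeFactors, (1 - (p : ℂ)⁻¹)
    set HA := ∏ p ∈ a.primeFactors, ((p : ℂ) - 1) * ((p : ℂ) ^ 2)⁻¹
    set TA := ∏ p ∈ a.primeFactors, ((p : ℂ) + 1)⁻¹
    set TB := ∏ p ∈ b.primeFactors, ((p : ℂ) + 1)⁻¹
    linear_combination ((b : ℂ)⁻¹ * S * PB * GB) * hA + ((b : ℂ)⁻¹ * S * TA) * hB +
      (S * TA * TB) * hbinv
end
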